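/- The Steklov integrals on so(4), Ĥ₁ = 2⟨√(A^∨) s, t⟩ − ⟨s, A s⟩ and Ĥ₂ = ⟨t, A^∨ t⟩ − 2⟨√(A^∨) s, A t⟩, are in involution with respect to the so(4) Lie–Poisson bracket: {Ĥ₁, Ĥ₂}*₁ = 0. -/

import Mathlib

open scoped BigOperators

abbrev V3 := Fin 3 → ℝ
abbrev Ph := V3 × V3

noncomputable def eps (i j k : Fin 3) : ℝ :=
  (((j : ℤ) - (i : ℤ)) * ((k : ℤ) - (j : ℤ)) * ((k : ℤ) - (i : ℤ)) : ℤ) / 2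

def dot (u v : V3) : ℝ := ∑ i, u i * v i

def cross (u v : V3) : V3 :=
  ![u 1 * v 2 - u 2 * v 1, u 2 * v 0 - u 0 * v 2, u 0 * v 1 - u 1 * v 0]

/-- derivative in the direction of the i-th coordinate of the first factor -/
noncomputable def Dp (i : Fin 3) (F : Ph → ℝ) (z : Ph) : ℝ :=
  fderiv ℝ F z (Pi.single i 1, 0)

/-- derivative in the direction of the i-th coordinate of the second factor -/
noncomputable def DM (i : Fin 3) (F : Ph → ℝ) (z : Ph) : ℝ :=
  fderiv ℝ F z (0, Pi.single i 1)

/-- e(3) Lie–Poisson bracket on functions of z = (p, M):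
{M_i,M_j} = ε_{ijk} M_k, {M_i,p_j} = ε_{ijk} p_k, {p_i,p_j} = 0. -/
noncomputable def pb1 (F G : Ph → ℝ) (z : Ph) : ℝ :=
  ∑ i, ∑ j, ∑ k, eps i j k *
    ( z.2 k * DM i F z * DM j G z
    + z.1 k * (DM i F z * Dp j G z + Dp i F z * DM j G z) )

/-- so(4) Lie–Poisson bracket on functions of z = (s, t):
{s_i,s_j} = ε_{ijk}s_k, {s_i,t_j} = 0, {t_i,t_j} = ε_{ijk}t_k. -/
noncomputable def pbO (F G : Ph → ℝ) (z : Ph) : ℝ :=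
  ∑ i, ∑ j, ∑ k, eps i j k *
    ( z.1 k * Dp i F z * Dp j G z + z.2 k * DM i F z * DM j G z )

/-!
Both integrals are quadratic forms coupling only `sᵢ` with `tᵢ`, so their gradients are explicit
and the so(4) bracket becomes `⟨s, ∇ₛĤ₁ × ∇ₛĤ₂⟩ + ⟨t, ∇ₜĤ₁ × ∇ₜĤ₂⟩`, a cubic polynomial in `(s, t)`.
It vanishes modulo the relations `d_{i+1} d_{i+2} = aᵢ dᵢ`, i.e. `(√(A^∨))^∨ = A √(A^∨)`, which follow
from `dᵢ² = a_{i+1} a_{i+2}` and `d₀ d₁ d₂ = a₀ a₁ a₂`.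
-/

def diagQuad (α β γ : Fin 3 → ℝ) (z : Ph) : ℝ :=
  ∑ i, (α i * z.1 i ^ 2 + β i * (z.1 i * z.2 i) + γ i * z.2 i ^ 2)

noncomputable def fstCoord (i : Fin 3) : Ph →L[ℝ] ℝ :=
  (ContinuousLinearMap.proj i).comp (ContinuousLinearMap.fst ℝ V3 V3)

noncomputable def sndCoord (i : Fin 3) : Ph →L[ℝ] ℝ :=
  (ContinuousLinearMap.proj i).comp (ContinuousLinearMap.snd ℝ V3 V3)

theorem hasFDerivAt_diagQuad (α β γ : Fin 3 → ℝ) (z : Ph) :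
    HasFDerivAt (diagQuad α β γ)
      (∑ i, ((2 * α i * z.1 i + β i * z.2 i) • fstCoord i
        + (β i * z.1 i + 2 * γ i * z.2 i) • sndCoord i)) z := by
  have hs (i : Fin 3) : HasFDerivAt (fun z : Ph => z.1 i) (fstCoord i) z :=
    (fstCoord i).hasFDerivAt
  have ht (i : Fin 3) : HasFDerivAt (fun z : Ph => z.2 i) (sndCoord i) z :=
    (sndCoord i).hasFDerivAt
  refine (HasFDerivAt.fun_sum fun i _ =>
    ((((hs i).pow 2).const_mul (α i)).add (((hs i).mul (ht i)).const_mul (β i))).add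
      (((ht i).pow 2).const_mul (γ i))).congr_fderiv ?_
  refine Finset.sum_congr rfl fun i _ => ?_
  ext v <;> simp [fstCoord, sndCoord] <;> ring

theorem Dp_diagQuad (α β γ : Fin 3 → ℝ) (z : Ph) :
    (fun j => Dp j (diagQuad α β γ) z) = fun j => 2 * α j * z.1 j + β j * z.2 j := by
  funext j
  simp [Dp, (hasFDerivAt_diagQuad α β γ z).fderiv, fstCoord, sndCoord, Pi.single_apply]

theorem DM_diagQuad (α β γ : Fin 3 → ℝ) (z : Ph) :
    (fun j => DM j (diagQuad α β γ) z) = fun j => β j * z.1 j + 2 * γ j * z.2 j := by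
  funext j
  simp [DM, (hasFDerivAt_diagQuad α β γ z).fderiv, fstCoord, sndCoord, Pi.single_apply]

theorem pbO_eq_dot_cross (F G : Ph → ℝ) (z : Ph) :
    pbO F G z = dot z.1 (cross (fun i => Dp i F z) (fun i => Dp i G z))
      + dot z.2 (cross (fun i => DM i F z) (fun i => DM i G z)) := by
  simp [pbO, dot, cross, eps, Fin.sum_univ_three]
  ring

theorem steklovH₁_eq_diagQuad (a d : Fin 3 → ℝ) :
    (fun z : Ph => 2 * ∑ i, d i * z.1 i * z.2 i - ∑ i, a i * z.1 i ^ 2)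
      = diagQuad (fun i => -a i) (fun i => 2 * d i) 0 := by
  funext z
  simp only [diagQuad, Fin.sum_univ_three, Pi.zero_apply]
  ring

theorem steklovH₂_eq_diagQuad (a d : Fin 3 → ℝ) :
    (fun z : Ph => (∑ i, (a (i+1) * a (i+2)) * z.2 i ^ 2) - 2 * ∑ i, d i * z.1 i * (a i * z.2 i))
      = diagQuad 0 (fun i => -2 * d i * a i) (fun i => a (i+1) * a (i+2)) := by
  funext z
  simp only [diagQuad, Fin.sum_univ_three, Pi.zero_apply]
  ring

theorem mul_eq_mul_of_sq_eq_of_mul_mul_eq {R : Type*} [CommRing R] [IsDomain R]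
    {x y z p q r : R} (hx : x ^ 2 = q * r) (hy : y ^ 2 = r * p) (hz : z ^ 2 = p * q)
    (hxyz : x * y * z = p * q * r) : y * z = p * x := by
  rcases eq_or_ne x 0 with rfl | hx0
  · have hqr : q * r = 0 := by rw [← hx]; ring
    have hyz : (y * z) ^ 2 = 0 := by rw [mul_pow, hy, hz]; linear_combination p ^ 2 * hqr
    simpa using pow_eq_zero_iff (n := 2) two_ne_zero |>.mp hyz
  · exact mul_left_cancel₀ hx0 (by linear_combination hxyz - p * hx)

/-- The Steklov integrals on so(4),
Ĥ₁ = 2⟨√(A^∨)s, t⟩ − ⟨s,As⟩ and Ĥ₂ = ⟨t,A^∨t⟩ − 2⟨√(A^∨)s, At⟩,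
are in involution; here d = diag entries of √(A^∨): dᵢ² = A^∨ᵢᵢ and
d₁d₂d₃ = a₁a₂a₃. -/
theorem steklov_so4_involution (a d : Fin 3 → ℝ)
    (hd : ∀ i, d i ^ 2 = a (i+1) * a (i+2))
    (hddd : d 0 * d 1 * d 2 = a 0 * a 1 * a 2) (z : Ph) :
    pbO (fun z => 2 * ∑ i, d i * z.1 i * z.2 i - ∑ i, a i * z.1 i ^ 2)
        (fun z => (∑ i, (a (i+1) * a (i+2)) * z.2 i ^ 2)
                  - 2 * ∑ i, d i * z.1 i * (a i * z.2 i)) z = 0 := by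
  have hd0 : d 0 ^ 2 = a 1 * a 2 := hd 0
  have hd1 : d 1 ^ 2 = a 2 * a 0 := hd 1
  have hd2 : d 2 ^ 2 = a 0 * a 1 := hd 2
  have h0 : d 1 * d 2 = a 0 * d 0 := mul_eq_mul_of_sq_eq_of_mul_mul_eq hd0 hd1 hd2 hddd
  have h1 : d 2 * d 0 = a 1 * d 1 :=
    mul_eq_mul_of_sq_eq_of_mul_mul_eq hd1 hd2 hd0 (by linear_combination hddd)
  have h2 : d 0 * d 1 = a 2 * d 2 :=
    mul_eq_mul_of_sq_eq_of_mul_mul_eq hd2 hd0 hd1 (by linear_combination hddd)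
  rw [steklovH₁_eq_diagQuad, steklovH₂_eq_diagQuad, pbO_eq_dot_cross,
    Dp_diagQuad, Dp_diagQuad, DM_diagQuad, DM_diagQuad]
  simp only [dot, cross, Fin.sum_univ_three, Matrix.cons_val_zero, Matrix.cons_val_one,
    Matrix.cons_val, Pi.zero_apply, Fin.reduceAdd]
  linear_combination
    (4 * (a 1 - a 2) * (z.1 1 * z.1 2 * z.2 0 + z.1 0 * z.2 1 * z.2 2)) * h0 +
    (4 * (a 2 - a 0) * (z.1 1 * z.2 0 * z.2 2 + z.1 0 * z.1 2 * z.2 1)) * h1 +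
    (4 * (a 0 - a 1) * (z.1 2 * z.2 0 * z.2 1 + z.1 0 * z.1 1 * z.2 2)) * h2
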